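/- arXiv:1109.1800 — 2 statements merged into one kernel-verified Lean document; each statement's English description precedes it below -/
import Mathlib

section
/- Let f : [0,∞) → V be a bounded measurable function into a separable Banach space satisfying, for some L ∈ V: ess-lim_{t→0+} limsup_{b→∞} ‖(1/b) ∑_{0 < n ≤ b} f(nt) − L‖ = 0. Then lim_{b→∞} (1/b) ∫_0^b f(x) dx = L. -/
/-!
Write `g b = b⁻¹ • ∫ x in 0..b, f x`. The substitution `x = n t` gives
`∫ t in 0..δ, f (n t) = δ • g (n δ)`, so averaging the Cesàro means `N⁻¹ ∑ f (n t) - L` over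
`t ∈ (0, δ)` and using dominated convergence shows that the Cesàro means of the sequence
`g (n δ)` are eventually within `ε` of `L`. Since `f` is bounded, `g` oscillates slowly:
`‖g s' - g s‖ ≤ 2 M (s' - s) / s'`. Comparing `g (j δ)` with its average over the window
`j < n ≤ j + j / m` (a Tauberian argument) puts `g (j δ)` within `O(M / m + m ε)` of `L`, and slow
oscillation carries this from the grid `δ ℕ` to all large `b`.
-/

open MeasureTheory Filter Topology

theorem intervalIntegrable_of_norm_le {E : Type*} [NormedAddCommGroup E] {f : ℝ → E}
    (hmeas : AEStronglyMeasurable f) {M : ℝ} (hbd : ∀ x, ‖f x‖ ≤ M) (a b : ℝ) :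
    IntervalIntegrable f volume a b :=
  intervalIntegrable_const.mono_fun' hmeas.restrict (.of_forall hbd)

theorem eventually_norm_integral_lt_of_ae_eventually_norm_lt {α E ι : Type*}
    [MeasurableSpace α] [NormedAddCommGroup E] [NormedSpace ℝ E] {μ : Measure α}
    [IsFiniteMeasure μ] {l : Filter ι} [l.IsCountablyGenerated] {X : ι → α → E} {C ε η : ℝ}
    (hXm : ∀ i, AEStronglyMeasurable (X i) μ) (hXC : ∀ i, ∀ᵐ t ∂μ, ‖X i t‖ ≤ C)
    (hX : ∀ᵐ t ∂μ, ∀ᶠ i in l, ‖X i t‖ < ε) (hη : ε * μ.real Set.univ < η) :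
    ∀ᶠ i in l, ‖∫ t, X i t ∂μ‖ < η := by
  set excess : ι → α → ℝ := fun i t => max (‖X i t‖ - ε) 0
  have hexcess_meas : ∀ i, AEStronglyMeasurable (excess i) μ := fun i => by
    have := hXm i; fun_prop
  have hexcess_le : ∀ i, ∀ᵐ t ∂μ, ‖excess i t‖ ≤ C + |ε| := fun i => by
    filter_upwards [hXC i] with t ht
    rw [Real.norm_of_nonneg (le_max_right _ _)]
    exact max_le (by linarith [neg_abs_le ε]) (by linarith [norm_nonneg (X i t), abs_nonneg ε])
  have hexcess_lim : Tendsto (fun i => ∫ t, excess i t ∂μ) l (𝓝 0) := by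
    simpa only [integral_zero] using tendsto_integral_filter_of_dominated_convergence
      (f := fun _ => 0) _ (.of_forall hexcess_meas) (.of_forall hexcess_le) (integrable_const _) (by
        filter_upwards [hX] with t ht
        refine tendsto_const_nhds.congr' (ht.mono fun i hi => ?_)
        exact (max_eq_right (sub_nonpos.2 hi.le)).symm)
  filter_upwards [hexcess_lim.eventually_lt_const (sub_pos.2 hη)] with i hi
  have hint : Integrable (excess i) μ := .of_bound (hexcess_meas i) _ (hexcess_le i)
  calc ‖∫ t, X i t ∂μ‖ ≤ ∫ t, ‖X i t‖ ∂μ := norm_integral_le_integral_norm _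
    _ ≤ ∫ t, (excess i t + ε) ∂μ :=
        integral_mono_of_nonneg (.of_forall fun _ => norm_nonneg _) (hint.add (integrable_const ε))
          (.of_forall fun t => by linarith [le_max_left (‖X i t‖ - ε) 0])
    _ = ∫ t, excess i t ∂μ + ε * μ.real Set.univ := by
        rw [integral_add hint (integrable_const ε), integral_const, smul_eq_mul, mul_comm]
    _ < η := by linarith

section

open Finset

variable {V : Type*} [NormedAddCommGroup V] [NormedSpace ℝ V]

theorem norm_inv_smul_sum_Ioc_floor_le {x : ℕ → V} {M : ℝ} (hx : ∀ n, ‖x n‖ ≤ M) (b : ℝ) :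
    ‖b⁻¹ • ∑ n ∈ Ioc 0 ⌊b⌋₊, x n‖ ≤ M := by
  rcases le_or_gt b 0 with hb | hb
  · simpa [Nat.floor_of_nonpos hb] using (norm_nonneg _).trans (hx 0)
  calc ‖b⁻¹ • ∑ n ∈ Ioc 0 ⌊b⌋₊, x n‖ ≤ b⁻¹ * (⌊b⌋₊ * M) := by
        rw [norm_smul, Real.norm_of_nonneg (inv_nonneg.2 hb.le)]
        gcongr
        exact (norm_sum_le _ _).trans
          (by simpa using sum_le_sum (s := Ioc 0 ⌊b⌋₊) fun n _ => hx n)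
    _ ≤ b⁻¹ * (b * M) := by
        have hM : 0 ≤ M := (norm_nonneg _).trans (hx 0)
        gcongr
        exact Nat.floor_le hb.le
    _ = M := by field_simp

theorem norm_sum_Ioc_sub_natCast_smul_le {a : ℕ → V} {L : V} {ε : ℝ} {N : ℕ}
    (h : ‖(N : ℝ)⁻¹ • ∑ n ∈ Ioc 0 N, a n - L‖ ≤ ε) :
    ‖∑ n ∈ Ioc 0 N, a n - (N : ℝ) • L‖ ≤ N * ε := by
  rcases N.eq_zero_or_pos with rfl | hN
  · simp
  have hN' : (N : ℝ) ≠ 0 := by positivity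
  calc ‖∑ n ∈ Ioc 0 N, a n - (N : ℝ) • L‖
      = ‖(N : ℝ) • ((N : ℝ)⁻¹ • ∑ n ∈ Ioc 0 N, a n - L)‖ := by
        rw [smul_sub, smul_inv_smul₀ hN']
    _ ≤ N * ε := by
        rw [norm_smul, Real.norm_natCast]; gcongr

theorem norm_sub_le_of_cesaro_window {a : ℕ → V} {L : V} {D ε : ℝ} {j K : ℕ} (hK : 0 < K)
    (hosc : ∀ n ∈ Ioc j (j + K), ‖a n - a j‖ ≤ D)
    (hj : ‖(j : ℝ)⁻¹ • ∑ n ∈ Ioc 0 j, a n - L‖ ≤ ε)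
    (hjK : ‖((j + K : ℕ) : ℝ)⁻¹ • ∑ n ∈ Ioc 0 (j + K), a n - L‖ ≤ ε) :
    ‖a j - L‖ ≤ D + (2 * j + K) / K * ε := by
  have hK' : (0 : ℝ) < K := by exact_mod_cast hK
  have hdecomp : (K : ℝ) • (a j - L) = ∑ n ∈ Ioc j (j + K), (a j - a n)
      + ((∑ n ∈ Ioc 0 (j + K), a n - ((j + K : ℕ) : ℝ) • L)
        - (∑ n ∈ Ioc 0 j, a n - (j : ℝ) • L)) := by
    rw [← sum_Ioc_consecutive a (Nat.zero_le j) (Nat.le_add_right j K), sum_sub_distrib,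
      sum_const, Nat.card_Ioc, Nat.add_sub_cancel_left, ← Nat.cast_smul_eq_nsmul ℝ]
    push_cast
    module
  have hwindow : ‖∑ n ∈ Ioc j (j + K), (a j - a n)‖ ≤ K * D := by
    calc ‖∑ n ∈ Ioc j (j + K), (a j - a n)‖ ≤ ∑ n ∈ Ioc j (j + K), ‖a j - a n‖ :=
          norm_sum_le _ _
      _ ≤ ∑ _n ∈ Ioc j (j + K), D :=
          sum_le_sum fun n hn => by rw [norm_sub_rev]; exact hosc n hn
      _ = K * D := by simp
  rw [← mul_le_mul_iff_of_pos_left hK']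
  calc K * ‖a j - L‖ = ‖(K : ℝ) • (a j - L)‖ := by rw [norm_smul, Real.norm_natCast]
    _ ≤ K * D + ((j + K : ℕ) * ε + j * ε) := by
        rw [hdecomp]
        refine (norm_add_le _ _).trans (add_le_add hwindow ((norm_sub_le _ _).trans ?_))
        exact add_le_add (norm_sum_Ioc_sub_natCast_smul_le hjK)
          (norm_sum_Ioc_sub_natCast_smul_le hj)
    _ = K * (D + (2 * j + K) / K * ε) := by push_cast; field_simp; ring

theorem eventually_norm_sub_le_of_cesaro {a : ℕ → V} {L : V} {C ε : ℝ} (hC : 0 ≤ C)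
    (hosc : ∀ j n : ℕ, 0 < j → j ≤ n → ‖a n - a j‖ ≤ C * (n - j) / n)
    (havg : ∀ᶠ N : ℕ in atTop, ‖(N : ℝ)⁻¹ • ∑ n ∈ Ioc 0 N, a n - L‖ ≤ ε) {m : ℕ} (hm : 0 < m) :
    ∀ᶠ j : ℕ in atTop, ‖a j - L‖ ≤ 2 * C / m + (2 * m + 1) * ε := by
  obtain ⟨N₀, hN₀⟩ := eventually_atTop.1 havg
  filter_upwards [eventually_ge_atTop (max N₀ m)] with j hj
  obtain ⟨hjN₀, hjm⟩ := max_le_iff.1 hj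
  have hε : 0 ≤ ε := (norm_nonneg _).trans (hN₀ j hjN₀)
  have hj0 : 0 < j := hm.trans_le hjm
  have hj' : (0 : ℝ) < j := by exact_mod_cast hj0
  have hjm' : (m : ℝ) ≤ j := by exact_mod_cast hjm
  -- On a window of length `K ≈ j / m` the sequence moves by at most `2 C / m`, while the two
  -- Cesàro errors cost only `(2 j + K) / K * ε ≤ (2 m + 1) * ε`.
  set K := j / m + 1
  have hK_le : (K : ℝ) ≤ j / m + 1 := by
    simp only [K, Nat.cast_add, Nat.cast_one]; gcongr; exact Nat.cast_div_le
  have hj_le : (j : ℝ) ≤ m * K := by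
    exact_mod_cast (Nat.lt_mul_div_succ j hm).le
  have hK : (0 : ℝ) < K := by positivity
  have hwindow := norm_sub_le_of_cesaro_window (D := C * K / j) (Nat.succ_pos _)
    (fun n hn => (hosc j n hj0 (mem_Ioc.1 hn).1.le).trans (by
      obtain ⟨hjn, hnK⟩ := mem_Ioc.1 hn
      have : (n : ℝ) ≤ j + K := by exact_mod_cast hnK
      have : (j : ℝ) ≤ n := by exact_mod_cast hjn.le
      gcongr; linarith))
    (hN₀ j hjN₀) (hN₀ _ (hjN₀.trans (Nat.le_add_right j K)))
  refine hwindow.trans (add_le_add ?_ (mul_le_mul_of_nonneg_right ?_ hε))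
  · calc C * K / j ≤ C * (j / m + 1) / j := by gcongr
      _ = C / m + C / j := by field_simp
      _ ≤ C / m + C / m := by gcongr
      _ = 2 * C / m := by ring
  · rw [add_div, div_self hK.ne', mul_div_assoc]
    gcongr
    rwa [div_le_iff₀ hK]

noncomputable def runningMean (f : ℝ → V) (b : ℝ) : V := b⁻¹ • ∫ x in 0..b, f x

theorem norm_runningMean_le {f : ℝ → V} {M : ℝ} (hbd : ∀ x, ‖f x‖ ≤ M) (b : ℝ) :
    ‖runningMean f b‖ ≤ M := by
  have hM : 0 ≤ M := (norm_nonneg _).trans (hbd 0)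
  rcases eq_or_ne b 0 with rfl | hb
  · simpa [runningMean] using hM
  calc ‖runningMean f b‖ ≤ |b⁻¹| * (M * |b - 0|) := by
        rw [runningMean, norm_smul, Real.norm_eq_abs]
        gcongr
        exact intervalIntegral.norm_integral_le_of_norm_le_const fun x _ => hbd x
    _ = M := by rw [sub_zero, abs_inv]; field_simp

theorem norm_runningMean_sub_le {f : ℝ → V} (hf : ∀ a b, IntervalIntegrable f volume a b)
    {M : ℝ} (hbd : ∀ x, ‖f x‖ ≤ M) {s s' : ℝ} (hs : 0 < s) (hss' : s ≤ s') :
    ‖runningMean f s' - runningMean f s‖ ≤ 2 * M * (s' - s) / s' := by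
  have hs' : 0 < s' := hs.trans_le hss'
  have hdecomp : runningMean f s' - runningMean f s
      = s'⁻¹ • (∫ x in s..s', f x) - ((s' - s) / s') • runningMean f s := by
    rw [runningMean, runningMean, ← intervalIntegral.integral_add_adjacent_intervals (hf 0 s)
      (hf s s'), smul_smul]
    match_scalars <;> field_simp
    ring
  have hint : ‖∫ x in s..s', f x‖ ≤ M * (s' - s) := by
    simpa [abs_of_nonneg (sub_nonneg.2 hss')] using
      intervalIntegral.norm_integral_le_of_norm_le_const (a := s) (b := s') fun x _ => hbd x
  calc ‖runningMean f s' - runningMean f s‖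
      ≤ ‖s'⁻¹ • (∫ x in s..s', f x)‖ + ‖((s' - s) / s') • runningMean f s‖ := by
        rw [hdecomp]; exact norm_sub_le _ _
    _ = s'⁻¹ * ‖∫ x in s..s', f x‖ + (s' - s) / s' * ‖runningMean f s‖ := by
        rw [norm_smul, norm_smul, Real.norm_of_nonneg (by positivity),
          Real.norm_of_nonneg (div_nonneg (sub_nonneg.2 hss') hs'.le)]
    _ ≤ s'⁻¹ * (M * (s' - s)) + (s' - s) / s' * M := by
        gcongr
        exact norm_runningMean_le hbd s
    _ = 2 * M * (s' - s) / s' := by field_simp; ring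

theorem norm_runningMean_natCast_mul_sub_le {f : ℝ → V}
    (hf : ∀ a b, IntervalIntegrable f volume a b) {M : ℝ} (hbd : ∀ x, ‖f x‖ ≤ M) {δ : ℝ}
    (hδ : 0 < δ) {j n : ℕ} (hj : 0 < j) (hjn : j ≤ n) :
    ‖runningMean f (n * δ) - runningMean f (j * δ)‖ ≤ 2 * M * (n - j) / n := by
  have hn : (0 : ℝ) < n := by exact_mod_cast hj.trans_le hjn
  calc ‖runningMean f (n * δ) - runningMean f (j * δ)‖ ≤ 2 * M * (n * δ - j * δ) / (n * δ) :=
        norm_runningMean_sub_le hf hbd (by positivity) (by gcongr)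
    _ = 2 * M * (n - j) / n := by field_simp

theorem tendsto_runningMean_sub_runningMean_floor {f : ℝ → V}
    (hf : ∀ a b, IntervalIntegrable f volume a b) {M : ℝ} (hbd : ∀ x, ‖f x‖ ≤ M) {δ : ℝ}
    (hδ : 0 < δ) :
    Tendsto (fun b => runningMean f b - runningMean f (⌊b / δ⌋₊ * δ)) atTop (𝓝 0) := by
  refine squeeze_zero_norm' ?_ ((tendsto_const_nhds (x := 2 * M * δ)).div_atTop tendsto_id)
  filter_upwards [eventually_ge_atTop δ] with b hb
  have hfloor : 1 ≤ ⌊b / δ⌋₊ := Nat.one_le_floor_iff _ |>.2 ((one_le_div hδ).2 hb)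
  have hlow : (⌊b / δ⌋₊ : ℝ) * δ ≤ b :=
    (le_div_iff₀ hδ).1 (Nat.floor_le (div_pos (hδ.trans_le hb) hδ).le)
  have hup : b - ⌊b / δ⌋₊ * δ ≤ δ := by
    have := Nat.lt_floor_add_one (b / δ)
    rw [div_lt_iff₀ hδ] at this
    linarith
  calc ‖runningMean f b - runningMean f (⌊b / δ⌋₊ * δ)‖
      ≤ 2 * M * (b - ⌊b / δ⌋₊ * δ) / b :=
        norm_runningMean_sub_le hf hbd (mul_pos (Nat.cast_pos.2 hfloor) hδ) hlow
    _ ≤ 2 * M * δ / b := by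
        have hM : 0 ≤ M := (norm_nonneg _).trans (hbd 0)
        gcongr
        exact hδ.le.trans hb

theorem eventually_dist_runningMean_lt_of_eventually_grid {f : ℝ → V}
    (hf : ∀ a b, IntervalIntegrable f volume a b) {M : ℝ} (hbd : ∀ x, ‖f x‖ ≤ M) {L : V}
    {δ r ρ : ℝ} (hδ : 0 < δ) (hρ : 0 < ρ)
    (hgrid : ∀ᶠ j : ℕ in atTop, ‖runningMean f (j * δ) - L‖ ≤ r) :
    ∀ᶠ b in atTop, dist (runningMean f b) L < ρ + r := by
  have hfloor : Tendsto (fun b : ℝ => ⌊b / δ⌋₊) atTop atTop :=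
    tendsto_nat_floor_atTop.comp (tendsto_id.atTop_div_const hδ)
  have hclose := Metric.tendsto_nhds.1 (tendsto_runningMean_sub_runningMean_floor hf hbd hδ) ρ hρ
  filter_upwards [hfloor.eventually hgrid, hclose] with b hb_grid hb_close
  rw [dist_zero_right] at hb_close
  calc dist (runningMean f b) L
      ≤ ‖runningMean f b - runningMean f (⌊b / δ⌋₊ * δ)‖
        + ‖runningMean f (⌊b / δ⌋₊ * δ) - L‖ := by
        rw [dist_eq_norm]; exact norm_sub_le_norm_sub_add_norm_sub _ _ _
    _ < ρ + r := by linarith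

theorem integral_comp_mul_left_eq_smul_runningMean (f : ℝ → V) {c : ℝ} (hc : c ≠ 0) (δ : ℝ) :
    ∫ t in 0..δ, f (c * t) = δ • runningMean f (c * δ) := by
  rcases eq_or_ne δ 0 with rfl | hδ
  · simp
  rw [intervalIntegral.integral_comp_mul_left _ hc, mul_zero, runningMean, smul_smul]
  congr 1
  field_simp

theorem integral_cesaro_comp_mul {f : ℝ → V} (hf : ∀ a b, IntervalIntegrable f volume a b)
    (N : ℕ) (δ : ℝ) :
    ∫ t in 0..δ, (N : ℝ)⁻¹ • ∑ n ∈ Ioc 0 N, f (n * t)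
      = δ • (N : ℝ)⁻¹ • ∑ n ∈ Ioc 0 N, runningMean f (n * δ) := by
  have hint : ∀ n ∈ Ioc 0 N, IntervalIntegrable (fun t => f (n * t)) volume 0 δ := fun n hn => by
    have hn0 : (n : ℝ) ≠ 0 := Nat.cast_ne_zero.2 (mem_Ioc.1 hn).1.ne'
    simpa [hn0] using (hf 0 (n * δ)).comp_mul_left (c := n)
  rw [intervalIntegral.integral_smul, intervalIntegral.integral_finsetSum hint, smul_comm δ]
  congr 1
  rw [smul_sum]
  exact sum_congr rfl fun n hn => integral_comp_mul_left_eq_smul_runningMean f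
    (Nat.cast_ne_zero.2 (mem_Ioc.1 hn).1.ne') δ

theorem eventually_norm_cesaro_runningMean_sub_lt [CompleteSpace V] {f : ℝ → V}
    (hmeas : StronglyMeasurable f) {M : ℝ} (hbd : ∀ x, ‖f x‖ ≤ M) {L : V} {ε ε' δ : ℝ}
    (hδ : 0 < δ) (hεε' : ε < ε')
    (hae : ∀ᵐ t ∂(volume.restrict (Set.Ioo (0 : ℝ) δ)),
      limsup (fun b : ℝ => ‖b⁻¹ • ∑ n ∈ Ioc 0 ⌊b⌋₊, f (n * t) - L‖) atTop < ε) :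
    ∀ᶠ N : ℕ in atTop, ‖(N : ℝ)⁻¹ • ∑ n ∈ Ioc 0 N, runningMean f (n * δ) - L‖ < ε' := by
  set Y : ℕ → ℝ → V := fun N t => (N : ℝ)⁻¹ • ∑ n ∈ Ioc 0 N, f (n * t)
  have hY_meas : ∀ N, StronglyMeasurable (Y N) := fun N => by
    have := fun n : ℕ => hmeas.comp_measurable (measurable_const_mul (n : ℝ))
    fun_prop
  have hbd_floor : ∀ b t, ‖b⁻¹ • ∑ n ∈ Ioc 0 ⌊b⌋₊, f (n * t) - L‖ ≤ M + ‖L‖ := fun b t =>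
    (norm_sub_le _ _).trans (add_le_add_left (norm_inv_smul_sum_Ioc_floor_le (fun _ => hbd _) b) _)
  have hY_lim : ∀ᵐ t ∂(volume.restrict (Set.Ioo 0 δ)), ∀ᶠ N in atTop, ‖Y N t - L‖ < ε := by
    filter_upwards [hae] with t ht
    have := eventually_lt_of_limsup_lt ht (isBoundedUnder_of ⟨M + ‖L‖, fun b => hbd_floor b t⟩)
    simpa [Y] using tendsto_natCast_atTop_atTop.eventually this
  have hY_int := eventually_norm_integral_lt_of_ae_eventually_norm_lt
    (X := fun N t => Y N t - L) (η := ε' * δ)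
    (fun N => ((hY_meas N).sub stronglyMeasurable_const).aestronglyMeasurable)
    (fun N => .of_forall fun t => by simpa [Y] using hbd_floor N t) hY_lim
    (by simpa [hδ.le] using mul_lt_mul_of_pos_right hεε' hδ)
  filter_upwards [hY_int] with N hN
  have hY_eq : ∫ t in Set.Ioo 0 δ, (Y N t - L)
      = δ • ((N : ℝ)⁻¹ • ∑ n ∈ Ioc 0 N, runningMean f (n * δ) - L) := by
    have hY_bd : ∀ t, ‖Y N t‖ ≤ M := fun t => by
      simpa using norm_inv_smul_sum_Ioc_floor_le (fun n => hbd (n * t)) N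
    rw [← integral_Ioc_eq_integral_Ioo, ← intervalIntegral.integral_of_le hδ.le,
      intervalIntegral.integral_sub
        (intervalIntegrable_of_norm_le (hY_meas N).aestronglyMeasurable hY_bd 0 δ)
        intervalIntegrable_const,
      integral_cesaro_comp_mul (intervalIntegrable_of_norm_le hmeas.aestronglyMeasurable hbd),
      intervalIntegral.integral_const, sub_zero, smul_sub]
  rw [hY_eq, norm_smul, Real.norm_of_nonneg hδ.le, mul_comm] at hN
  exact lt_of_mul_lt_mul_right hN hδ.le

end

theorem stmt14_general {V : Type*} [NormedAddCommGroup V] [NormedSpace ℝ V]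
    [CompleteSpace V]
    (f : ℝ → V) (hmeas : StronglyMeasurable f)
    (M : ℝ) (hbd : ∀ x, ‖f x‖ ≤ M)
    (L : V)
    (hess : ∀ ε > (0:ℝ), ∃ δ > (0:ℝ),
      ∀ᵐ t ∂(volume.restrict (Set.Ioo (0:ℝ) δ)),
        limsup (fun b : ℝ => ‖b⁻¹ • ∑ n ∈ Finset.Ioc 0 ⌊b⌋₊, f (n * t) - L‖) atTop
          < ε) :
    Tendsto (fun b : ℝ => b⁻¹ • ∫ x in Set.Icc (0:ℝ) b, f x) atTop (𝓝 L) := by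
  have hf := intervalIntegrable_of_norm_le hmeas.aestronglyMeasurable hbd
  have hM : 0 ≤ M := (norm_nonneg _).trans (hbd 0)
  have hmean : runningMean f =ᶠ[atTop] fun b => b⁻¹ • ∫ x in Set.Icc (0:ℝ) b, f x := by
    filter_upwards [eventually_ge_atTop 0] with b hb
    rw [runningMean, intervalIntegral.integral_of_le hb, integral_Icc_eq_integral_Ioc]
  refine Tendsto.congr' hmean (Metric.tendsto_nhds.2 fun η hη => ?_)
  obtain ⟨m, hm⟩ := exists_nat_gt (16 * M / η)
  have hm0 : 0 < m := by exact_mod_cast (by positivity : 0 ≤ 16 * M / η).trans_lt hm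
  have hmη : 2 * (2 * M) / m < η / 4 := by
    rw [div_lt_iff₀ hη] at hm; rw [div_lt_iff₀ (by positivity)]; linarith
  set ε := η / (2 * (2 * m + 1)) with hε
  have hmε : (2 * m + 1) * ε = η / 2 := by rw [hε]; field_simp
  obtain ⟨δ, hδ, hae⟩ := hess (ε / 2) (by positivity)
  have hgrid := eventually_norm_sub_le_of_cesaro (a := fun n => runningMean f (n * δ))
    (C := 2 * M) (by positivity)
    (fun _ _ hj hjn => norm_runningMean_natCast_mul_sub_le hf hbd hδ hj hjn)
    ((eventually_norm_cesaro_runningMean_sub_lt hmeas hbd hδ (half_lt_self (by positivity))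
      hae).mono fun _ h => h.le) hm0
  filter_upwards [eventually_dist_runningMean_lt_of_eventually_grid hf hbd hδ
    (by positivity : 0 < η / 4) hgrid] with b hb
  linarith

theorem stmt14 {V : Type*} [NormedAddCommGroup V] [NormedSpace ℝ V]
    [CompleteSpace V] [SecondCountableTopology V]
    (f : ℝ → V) (hmeas : StronglyMeasurable f)
    (M : ℝ) (hbd : ∀ x, ‖f x‖ ≤ M)
    (L : V)
    (hess : ∀ ε > (0:ℝ), ∃ δ > (0:ℝ),
      ∀ᵐ t ∂(volume.restrict (Set.Ioo (0:ℝ) δ)),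
        limsup (fun b : ℝ => ‖b⁻¹ • ∑ n ∈ Finset.Ioc 0 ⌊b⌋₊, f (n * t) - L‖) atTop
          < ε) :
    Tendsto (fun b : ℝ => b⁻¹ • ∫ x in Set.Icc (0:ℝ) b, f x) atTop (𝓝 L) :=
  stmt14_general f hmeas M hbd L hess
end

section
/- For any bounded measurable function f : ℝ^d → ℝ and any Følner sequence (Φ_N) in ℝ^d: liminf_{N→∞} (1/w(Φ_N)) ∫_{Φ_N} f dx ≥ liminf_{l(b-a)→∞} (1/w(b-a)) ∫_a^b f dx, and limsup_{N→∞} (1/w(Φ_N)) ∫_{Φ_N} f dx ≤ limsup_{l(b-a)→∞} (1/w(b-a)) ∫_a^b f dx. -/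
/-!
Translating `Φ_N` by `y` changes `∫_{Φ_N} f` by at most `M · w(Φ_N ∆ (y + Φ_N))`, so the Følner
property makes `⨍_{Φ_N} f(y + ·) - ⨍_{Φ_N} f` tend to `0` for every `y`. Averaging over `y` in a
fixed box `Q` (dominated convergence, then Fubini), `⨍_{Φ_N} f` is asymptotically equal to
`⨍_{Φ_N} g` with `g x = ⨍_{y ∈ Q} f (y + x)` the average of `f` over the box `Q + x`. If all
boxes with large enough sides have averages `> c`, then `g > c` everywhere and hence
`liminf ⨍_{Φ_N} f ≥ c`. The `limsup` inequality is the `liminf` one for `-f`.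
-/

open MeasureTheory Filter Topology

/-- The filter of pairs of boxes `(a, b)` in `ℝ^d` with all side lengths `b i - a i`
tending to infinity. -/
def boxFilter (d : ℕ) : Filter ((Fin d → ℝ) × (Fin d → ℝ)) :=
  Filter.comap (fun p => p.2 - p.1) (atTop : Filter (Fin d → ℝ))

open Set
open scoped Pointwise symmDiff ENNReal

section SetIntegral

variable {α β E : Type*} [MeasurableSpace α] [MeasurableSpace β] {μ : Measure α}
  [NormedAddCommGroup E] [NormedSpace ℝ E] {f : α → E} {M : ℝ}

theorem norm_setAverage_le_of_norm_le (hM : 0 ≤ M) (hf : ∀ x, ‖f x‖ ≤ M) (s : Set α) :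
    ‖⨍ x in s, f x ∂μ‖ ≤ M := by
  rw [setAverage_eq, norm_smul, norm_inv, Real.norm_of_nonneg measureReal_nonneg]
  rcases eq_or_ne (μ.real s) 0 with hs | hs
  · simpa [hs] using hM
  have hfin : μ s < ∞ := lt_top_iff_ne_top.2 fun h => hs (by simp [measureReal_def, h])
  rw [inv_mul_le_iff₀ (measureReal_nonneg.lt_of_ne' hs), mul_comm]
  exact norm_setIntegral_le_of_norm_le_const hfin fun x _ => hf x

theorem norm_setIntegral_sub_setIntegral_le (hfm : AEStronglyMeasurable f μ)
    (hf : ∀ x, ‖f x‖ ≤ M) {s t : Set α} (hs : MeasurableSet s) (ht : MeasurableSet t)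
    (hμs : μ s ≠ ∞) (hμt : μ t ≠ ∞) :
    ‖∫ x in s, f x ∂μ - ∫ x in t, f x ∂μ‖ ≤ M * μ.real (s ∆ t) := by
  have hint {u : Set α} (hu : μ u ≠ ∞) : IntegrableOn f u μ :=
    Measure.integrableOn_of_bounded hu hfm (ae_of_all _ hf)
  have hst : μ (s ∆ t) ≠ ∞ :=
    ((measure_mono symmDiff_le_sup).trans_lt (measure_union_lt_top hμs.lt_top hμt.lt_top)).ne
  rw [← integral_indicator hs, ← integral_indicator ht,
    ← integral_sub ((hint hμs).integrable_indicator hs) ((hint hμt).integrable_indicator ht),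
    mul_comm, ← smul_eq_mul, ← integral_indicator_const _ (hs.symmDiff ht)]
  refine norm_integral_le_of_norm_le
    ((integrableOn_const hst).integrable_indicator (hs.symmDiff ht)) (ae_of_all _ fun x => ?_)
  by_cases hxs : x ∈ s <;> by_cases hxt : x ∈ t <;> simp [hxs, hxt, hf x, Set.mem_symmDiff]

theorem setAverage_setAverage_swap [SFinite μ] {ν : Measure β} [SFinite ν] {g : α → β → E}
    {s : Set α} {t : Set β}
    (hg : Integrable (Function.uncurry g) ((μ.restrict s).prod (ν.restrict t))) :
    ⨍ x in s, ⨍ y in t, g x y ∂ν ∂μ = ⨍ y in t, ⨍ x in s, g x y ∂μ ∂ν := by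
  simp only [setAverage_eq, integral_smul, smul_smul, mul_comm, integral_integral_swap hg]

theorem MeasureTheory.StronglyMeasurable.setAverage_prod_right {ν : Measure β} [SFinite ν]
    {g : α → β → E} (hg : StronglyMeasurable (Function.uncurry g)) (t : Set β) :
    StronglyMeasurable fun x => ⨍ y in t, g x y ∂ν := by
  simp only [setAverage_eq]
  exact hg.integral_prod_right.const_smul _

end SetIntegral

section Translation

variable {G E ι : Type*} [MeasurableSpace G] [AddGroup G] [MeasurableAdd G] {μ : Measure G}
  [μ.IsAddLeftInvariant] [NormedAddCommGroup E] [NormedSpace ℝ E] {l : Filter ι}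
  {F : ι → Set G} {f : G → E} {M : ℝ}

theorem setIntegral_vadd (f : G → E) (y : G) (s : Set G) :
    ∫ x in y +ᵥ s, f x ∂μ = ∫ x in s, f (y + x) ∂μ :=
  (measurePreserving_vadd y μ).setIntegral_image_emb (measurableEmbedding_const_vadd y) f s

theorem setAverage_vadd (f : G → E) (y : G) (s : Set G) :
    ⨍ x in y +ᵥ s, f x ∂μ = ⨍ x in s, f (y + x) ∂μ := by
  rw [setAverage_eq, setAverage_eq, setIntegral_vadd, measureReal_def, measure_vadd,
    ← measureReal_def]

theorem IsAddFoelner.tendsto_setAverage_add_sub (hF : IsAddFoelner G μ l F)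
    (hfm : AEStronglyMeasurable f μ) (hf : ∀ x, ‖f x‖ ≤ M) (y : G) :
    Tendsto (fun i => ⨍ x in F i, f (y + x) ∂μ - ⨍ x in F i, f x ∂μ) l (𝓝 0) := by
  have hbound : ∀ᶠ i in l, ‖⨍ x in F i, f (y + x) ∂μ - ⨍ x in F i, f x ∂μ‖ ≤
      M * (μ ((y +ᵥ F i) ∆ F i) / μ (F i)).toReal := by
    filter_upwards [hF.eventually_measurableSet, hF.eventually_meas_ne_top] with i hm htop
    have htrans := norm_setIntegral_sub_setIntegral_le hfm hf (hm.const_vadd y) hm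
      (by rwa [measure_vadd]) htop
    rw [setAverage_eq, setAverage_eq, ← smul_sub, ← setIntegral_vadd, norm_smul, norm_inv,
      Real.norm_of_nonneg measureReal_nonneg, ENNReal.toReal_div, ← measureReal_def,
      ← measureReal_def, mul_div_assoc', div_eq_inv_mul]
    exact mul_le_mul_of_nonneg_left htrans (inv_nonneg.2 measureReal_nonneg)
  have hlim : Tendsto (fun i => M * (μ ((y +ᵥ F i) ∆ F i) / μ (F i)).toReal) l (𝓝 0) := by
    simpa using ((ENNReal.tendsto_toReal ENNReal.zero_ne_top).comp
      (hF.tendsto_meas_vadd_symmDiff y)).const_mul M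
  exact squeeze_zero_norm' hbound hlim

end Translation

namespace IsAddFoelner

variable {G E ι : Type*} [MeasurableSpace G] [AddGroup G] [MeasurableAdd₂ G] {μ : Measure G}
  [μ.IsAddLeftInvariant] [SFinite μ] [NormedAddCommGroup E] [NormedSpace ℝ E] {l : Filter ι}
  {F : ι → Set G} {f : G → E} {M : ℝ}

theorem tendsto_setAverage_setAverage_add_sub [CompleteSpace E] [l.IsCountablyGenerated]
    (hF : IsAddFoelner G μ l F) (hfm : StronglyMeasurable f) (hf : ∀ x, ‖f x‖ ≤ M) {Q : Set G}
    (hQ₀ : μ Q ≠ 0) (hQ : μ Q ≠ ∞) :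
    Tendsto (fun i => ⨍ x in F i, ⨍ y in Q, f (y + x) ∂μ ∂μ - ⨍ x in F i, f x ∂μ) l (𝓝 0) := by
  have : IsFiniteMeasure (μ.restrict Q) := isFiniteMeasure_restrict.2 hQ
  suffices Tendsto (fun i => ⨍ y in Q, ⨍ x in F i, f (y + x) ∂μ ∂μ - ⨍ x in F i, f x ∂μ) l (𝓝 0) by
    refine this.congr' ?_
    filter_upwards [hF.eventually_meas_ne_top] with i hFi
    have : IsFiniteMeasure (μ.restrict (F i)) := isFiniteMeasure_restrict.2 hFi
    have hint : Integrable (fun p : G × G => f (p.1 + p.2))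
        ((μ.restrict Q).prod (μ.restrict (F i))) :=
      .of_bound (hfm.comp_measurable measurable_add).aestronglyMeasurable M
        (ae_of_all _ fun _ => hf _)
    rw [setAverage_setAverage_swap (g := fun x y => f (y + x)) hint.swap]
  have hM : 0 ≤ M := (norm_nonneg _).trans (hf 0)
  have hmeas (i : ι) : StronglyMeasurable fun y => ⨍ x in F i, f (y + x) ∂μ :=
    (hfm.comp_measurable measurable_add).setAverage_prod_right (g := fun y x => f (y + x)) (F i)
  have hbound (i : ι) (y : G) : ‖⨍ x in F i, f (y + x) ∂μ‖ ≤ M :=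
    norm_setAverage_le_of_norm_le hM (fun x => hf _) _
  have hsplit (i : ι) : ⨍ y in Q, (⨍ x in F i, f (y + x) ∂μ - ⨍ x in F i, f x ∂μ) ∂μ =
      ⨍ y in Q, ⨍ x in F i, f (y + x) ∂μ ∂μ - ⨍ x in F i, f x ∂μ := by
    rw [setAverage_eq, integral_sub (.of_bound (hmeas i).aestronglyMeasurable M
      (ae_of_all _ (hbound i))) (integrable_const _), setIntegral_const, smul_sub,
      inv_smul_smul₀ (measureReal_ne_zero_iff hQ |>.2 hQ₀), ← setAverage_eq]
  have hlim := tendsto_integral_filter_of_dominated_convergence (μ := μ.restrict Q)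
    (fun _ => M + M)
    (.of_forall fun i => ((hmeas i).sub stronglyMeasurable_const).aestronglyMeasurable)
    (.of_forall fun i => ae_of_all _ fun y => (norm_sub_le _ _).trans
      (add_le_add (hbound i y) (norm_setAverage_le_of_norm_le hM hf _)))
    (integrable_const _)
    (ae_of_all _ fun y => hF.tendsto_setAverage_add_sub hfm.aestronglyMeasurable hf y)
  simp_rw [← hsplit]
  simpa [setAverage_eq] using hlim.const_smul (μ.real Q)⁻¹

theorem le_liminf_setAverage [l.NeBot] [l.IsCountablyGenerated] (hF : IsAddFoelner G μ l F)
    {f : G → ℝ} (hfm : StronglyMeasurable f) (hf : ∀ x, |f x| ≤ M) {Q : Set G} (hQ₀ : μ Q ≠ 0)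
    (hQ : μ Q ≠ ∞) {c : ℝ} (hc : ∀ x, c ≤ ⨍ y in Q, f (y + x) ∂μ) :
    c ≤ liminf (fun i => ⨍ x in F i, f x ∂μ) l := by
  have hM : 0 ≤ M := (abs_nonneg _).trans (hf 0)
  have hg : ∀ᶠ i in l, c ≤ ⨍ x in F i, ⨍ y in Q, f (y + x) ∂μ ∂μ := by
    filter_upwards [hF.eventually_meas_ne_zero, hF.eventually_meas_ne_top] with i hFi₀ hFi
    have hmeas : StronglyMeasurable fun x => ⨍ y in Q, f (y + x) ∂μ :=
      (hfm.comp_measurable (measurable_snd.add measurable_fst)).setAverage_prod_right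
        (g := fun x y => f (y + x)) Q
    obtain ⟨x, -, hx⟩ := exists_le_setAverage hFi₀ hFi (Measure.integrableOn_of_bounded hFi
      hmeas.aestronglyMeasurable
      (ae_of_all _ fun x => norm_setAverage_le_of_norm_le hM (fun y => hf _) Q))
    exact (hc x).trans hx
  have hA : IsCoboundedUnder (· ≥ ·) l fun i => ⨍ x in F i, f x ∂μ :=
    isCoboundedUnder_ge_of_le l fun i =>
      (Real.le_norm_self _).trans (norm_setAverage_le_of_norm_le hM hf _)
  refine le_of_forall_lt_imp_le_of_dense fun c' hc' => le_liminf_of_le hA ?_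
  filter_upwards [hg, (hF.tendsto_setAverage_setAverage_add_sub hfm hf hQ₀ hQ).eventually
    (eventually_lt_nhds (sub_pos.2 hc'))] with i h₁ h₂
  linarith

end IsAddFoelner

-- No boundedness needed: `sInf s = -sSup (-s)` holds on `ℝ` for every set, junk values included.
theorem Real.liminf_neg {α : Type*} (l : Filter α) (u : α → ℝ) :
    liminf (fun x => -u x) l = -limsup u l := by
  rw [liminf_eq, limsup_eq, Real.sInf_def, neg_neg]
  congr 1
  ext a
  simp only [Set.mem_neg, Set.mem_ofPred_eq]
  constructor <;> exact fun h => h.mono fun x hx => by linarith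

section Box

variable {d : ℕ}

instance : (boxFilter d).NeBot :=
  comap_neBot fun t ht => by
    obtain ⟨u, hu⟩ := Filter.nonempty_of_mem ht
    exact ⟨(0, u), by simpa using hu⟩

theorem inv_prod_mul_setIntegral_Icc {a b : Fin d → ℝ} (hab : a ≤ b) (f : (Fin d → ℝ) → ℝ) :
    (∏ i, (b i - a i))⁻¹ * ∫ x in Icc a b, f x = ⨍ x in Icc a b, f x := by
  rw [setAverage_eq, measureReal_def, Real.volume_Icc_pi_toReal hab, smul_eq_mul]

theorem exists_forall_lt_setAverage_Icc {f : (Fin d → ℝ) → ℝ} {M : ℝ} (hf : ∀ x, |f x| ≤ M)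
    {c : ℝ} (hc : c < liminf (fun p : (Fin d → ℝ) × (Fin d → ℝ) =>
      (∏ i, (p.2 i - p.1 i))⁻¹ * ∫ x in Icc p.1 p.2, f x) (boxFilter d)) :
    ∃ w, volume (Icc 0 w) ≠ 0 ∧ ∀ x, c < ⨍ y in Icc 0 w, f (y + x) := by
  have hM : 0 ≤ M := (abs_nonneg _).trans (hf 0)
  have hle : ∀ᶠ p in boxFilter d, p.1 ≤ p.2 :=
    (tendsto_comap.eventually (eventually_ge_atTop 0)).mono fun p hp => sub_nonneg.1 hp
  have hbdd : IsBoundedUnder (· ≥ ·) (boxFilter d) fun p : (Fin d → ℝ) × (Fin d → ℝ) =>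
      (∏ i, (p.2 i - p.1 i))⁻¹ * ∫ x in Icc p.1 p.2, f x := by
    refine ⟨-M, eventually_map.2 (hle.mono fun p hp => ?_)⟩
    rw [inv_prod_mul_setIntegral_Icc hp]
    exact neg_le_of_abs_le
      (norm_setAverage_le_of_norm_le (μ := volume) (f := f) hM hf (Icc p.1 p.2))
  obtain ⟨v, hv⟩ :=
    eventually_atTop.1 (eventually_comap.1 (eventually_lt_of_lt_liminf hc hbdd))
  set w := v ⊔ 1
  have hw : 1 ≤ w := le_sup_right
  refine ⟨w, ?_, fun x => ?_⟩
  · simpa [Real.volume_Icc_pi, Finset.prod_ne_zero_iff] using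
      fun i => zero_lt_one.trans_le (hw i)
  · have := hv w le_sup_left (x, x + w) (add_sub_cancel_left x w)
    have hbox : x +ᵥ Icc 0 w = Icc x (x + w) := by
      rw [← Set.image_vadd]
      simpa using Set.image_const_add_Icc x 0 w
    rw [inv_prod_mul_setIntegral_Icc (le_add_of_nonneg_right (zero_le_one.trans hw)), ← hbox,
      setAverage_vadd] at this
    simpa only [add_comm x] using this

theorem IsAddFoelner.liminf_boxFilter_le {ι : Type*} {l : Filter ι} [l.NeBot]
    [l.IsCountablyGenerated] {F : ι → Set (Fin d → ℝ)}
    (hF : IsAddFoelner (Fin d → ℝ) volume l F)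
    {f : (Fin d → ℝ) → ℝ} (hfm : Measurable f) {M : ℝ} (hf : ∀ x, |f x| ≤ M) :
    liminf (fun p : (Fin d → ℝ) × (Fin d → ℝ) =>
        (∏ i, (p.2 i - p.1 i))⁻¹ * ∫ x in Icc p.1 p.2, f x) (boxFilter d)
      ≤ liminf (fun i => ⨍ x in F i, f x) l :=
  le_of_forall_lt_imp_le_of_dense fun c hc => by
    obtain ⟨w, hw₀, hw⟩ := exists_forall_lt_setAverage_Icc hf hc
    exact hF.le_liminf_setAverage hfm.stronglyMeasurable hf hw₀ measure_Icc_lt_top.ne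
      fun x => (hw x).le

end Box

theorem stmt17 {d : ℕ} (f : (Fin d → ℝ) → ℝ) (hmeas : Measurable f)
    (M : ℝ) (hbd : ∀ x, |f x| ≤ M)
    (Φ : ℕ → Set (Fin d → ℝ)) (hΦmeas : ∀ N, MeasurableSet (Φ N))
    (hΦpos : ∀ N, 0 < volume (Φ N)) (hΦfin : ∀ N, volume (Φ N) < ⊤)
    (hFolner : ∀ y : Fin d → ℝ,
      Tendsto (fun N => volume (symmDiff (Φ N) ((fun x => x + y) '' Φ N)) / volume (Φ N))
        atTop (𝓝 0)) :
    (liminf (fun N => ((volume (Φ N)).toReal)⁻¹ * ∫ x in Φ N, f x) atTop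
      ≥ liminf (fun p : (Fin d → ℝ) × (Fin d → ℝ) =>
          (∏ i, (p.2 i - p.1 i))⁻¹ * ∫ x in Set.Icc p.1 p.2, f x) (boxFilter d))
    ∧
    (limsup (fun N => ((volume (Φ N)).toReal)⁻¹ * ∫ x in Φ N, f x) atTop
      ≤ limsup (fun p : (Fin d → ℝ) × (Fin d → ℝ) =>
          (∏ i, (p.2 i - p.1 i))⁻¹ * ∫ x in Set.Icc p.1 p.2, f x) (boxFilter d)) := by
  have hF : IsAddFoelner (Fin d → ℝ) volume atTop Φ :=
    ⟨.of_forall hΦmeas, .of_forall fun N => (hΦpos N).ne', .of_forall fun N => (hΦfin N).ne,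
      fun y => by simpa [symmDiff_comm, ← Set.image_vadd, add_comm] using hFolner y⟩
  simp only [← measureReal_def, ← smul_eq_mul, ← setAverage_eq]
  refine ⟨hF.liminf_boxFilter_le hmeas hbd, ?_⟩
  have h := hF.liminf_boxFilter_le hmeas.neg (f := fun x => -f x) (by simpa using hbd)
  simp only [integral_neg, mul_neg, average_neg, Real.liminf_neg] at h
  exact neg_le_neg_iff.1 h
end
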